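/- arXiv:1303.1643 — 2 statements merged into one kernel-verified Lean document; each statement's English description precedes it below -/
import Mathlib

section
/- A finite graph G is an interval graph if and only if the clique matrix of G has the consecutive ones property. -/
/-- A binary matrix (rows `R`, columns `Fin n`, entries in `Bool`) has the
consecutive ones property: some permutation of the columns makes the ones in
every row consecutive. -/
def HasCOP {R : Type*} {n : ℕ} (M : R → Fin n → Bool) : Prop :=
  ∃ σ : Equiv.Perm (Fin n), ∀ (i : R) (a b c : Fin n), a ≤ b → b ≤ c →
    M i (σ a) = true → M i (σ c) = true → M i (σ b) = true

/-- The set `S_i` of columns having a `1` in row `i`. -/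
def rowSet {R : Type*} {n : ℕ} (M : R → Fin n → Bool) (i : R) : Set (Fin n) :=
  {j | M i j = true}

/-- The set `S_i` of columns having a `1` in row `i`, as a `Finset`. -/
def rowFinset {R : Type*} {n : ℕ} (M : R → Fin n → Bool) (i : R) : Finset (Fin n) :=
  Finset.univ.filter (fun j => M i j = true)

/-- `vert(c_k)`: vertices (rows) having a `1` in column `k`. -/
def vert {R : Type*} {n : ℕ} (M : R → Fin n → Bool) (k : Fin n) : Set R :=
  {i | M i k = true}

/-- The submatrix `M \ D` obtained by deleting the rows in `D`. -/
def delRows {R : Type*} {n : ℕ} (M : R → Fin n → Bool) (D : Set R) :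
    {i : R // i ∉ D} → Fin n → Bool :=
  fun i j => M i.1 j

/-- `M̃`: the `(n+m) × n` matrix obtained by stacking the `n × n` identity
matrix on top of `M`. -/
def augMatrix {m n : ℕ} (M : Fin m → Fin n → Bool) : Fin (n + m) → Fin n → Bool :=
  fun i j => Fin.addCases (fun i' : Fin n => decide (i' = j)) (fun i' : Fin m => M i' j) i

/-- The derived graph `G(M)`: one vertex per row, two distinct rows adjacent
iff some column has a `1` in both. -/
def derivedGraph {R : Type*} {n : ℕ} (M : R → Fin n → Bool) : SimpleGraph R where
  Adj i j := i ≠ j ∧ ∃ k, M i k = true ∧ M j k = true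
  symm := by
    refine ⟨?_⟩
    rintro i j ⟨hne, k, h1, h2⟩
    exact ⟨hne.symm, k, h2, h1⟩
  loopless := by refine ⟨?_⟩; rintro i ⟨h, -⟩; exact h rfl

/-- An interval graph: vertices can be assigned nonempty real intervals so
that distinct vertices are adjacent iff their intervals intersect. -/
def IsIntervalGraph {V : Type*} (G : SimpleGraph V) : Prop :=
  ∃ I : V → Set ℝ, (∀ v, (I v).Nonempty ∧ (I v).OrdConnected) ∧
    ∀ u v : V, u ≠ v → (G.Adj u v ↔ (I u ∩ I v).Nonempty)

/-- A maximal clique: a clique not properly contained in another clique. -/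
def IsMaximalClique {V : Type*} (G : SimpleGraph V) (Q : Set V) : Prop :=
  G.IsClique Q ∧ ∀ Q' : Set V, G.IsClique Q' → Q ⊆ Q' → Q' = Q

/-- A maximal clique of the induced subgraph `G[X]` (viewed as a set of
vertices of `G` contained in `X`). -/
def IsMaximalCliqueOn {V : Type*} (G : SimpleGraph V) (X Q : Set V) : Prop :=
  Q ⊆ X ∧ G.IsClique Q ∧ ∀ Q' : Set V, Q' ⊆ X → G.IsClique Q' → Q ⊆ Q' → Q' = Q

/-- `N` is the clique matrix of `G`: its columns are pairwise distinct and the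
column sets are exactly the maximal cliques of `G`. -/
def IsCliqueMatrix {V C : Type*} (G : SimpleGraph V) (N : V → C → Bool) : Prop :=
  Function.Injective (fun j : C => fun i : V => N i j) ∧
  ∀ Q : Set V, IsMaximalClique G Q ↔ ∃ j : C, Q = {i | N i j = true}

/-- An intersection cardinality preserving interval assignment: each row set
`S_i` gets an integer interval `[a i, b i]` with `|S_i ∩ S_j| = |I_i ∩ I_j|`
for all pairs `i, j`. -/
def IsICPIA {m n : ℕ} (M : Fin m → Fin n → Bool) (a b : Fin m → ℤ) : Prop :=
  ∀ i j : Fin m,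
    (rowFinset M i ∩ rowFinset M j).card =
    (Finset.Icc (a i) (b i) ∩ Finset.Icc (a j) (b j)).card

/-- `c` is an induced cycle of length `l` inside the induced subgraph `G[X]`:
`l ≥ 3` distinct vertices of `X`, cyclically consecutive ones adjacent, and
non-consecutive ones non-adjacent. -/
def IsInducedCycleOn {V : Type*} (G : SimpleGraph V) (X : Set V) (l : ℕ) (c : Fin l → V) : Prop :=
  3 ≤ l ∧ Function.Injective c ∧ (∀ i, c i ∈ X) ∧
  ∀ i j : Fin l, i ≠ j →
    (G.Adj (c i) (c j) ↔ (j.val = (i.val + 1) % l ∨ i.val = (j.val + 1) % l))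

/-- `G` has an induced cycle of length 4. -/
def HasInducedC4 {V : Type*} (G : SimpleGraph V) : Prop :=
  ∃ v1 v2 v3 v4 : V, v1 ≠ v2 ∧ v1 ≠ v3 ∧ v1 ≠ v4 ∧ v2 ≠ v3 ∧ v2 ≠ v4 ∧ v3 ≠ v4 ∧
    G.Adj v1 v2 ∧ G.Adj v2 v3 ∧ G.Adj v3 v4 ∧ G.Adj v4 v1 ∧ ¬ G.Adj v1 v3 ∧ ¬ G.Adj v2 v4

/-- A comparability graph: some partial order on the vertices makes distinct
vertices adjacent iff they are comparable. -/
def IsComparabilityGraph {V : Type*} (G : SimpleGraph V) : Prop :=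
  ∃ p : PartialOrder V, ∀ u v : V, u ≠ v → (G.Adj u v ↔ (p.le u v ∨ p.le v u))

/-! Helly's theorem on the line turns the intervals of a clique into a common point, and sorting
the maximal cliques by these points puts the ones of every row next to each other, since a vertex
whose interval contains the point of a maximal clique belongs to it. Conversely, under a
consecutive ones ordering each vertex gets the interval spanned by the positions of its cliques;
two such intervals meet exactly when the two rows share a column, and the graph of shared columns
of a clique matrix is the graph itself. -/

theorem Real.helly_ordConnected {ι : Type*} {F : ι → Set ℝ} {s : Finset ι}
    (hF : ∀ i ∈ s, (F i).OrdConnected)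
    (hpair : ∀ i ∈ s, ∀ j ∈ s, (F i ∩ F j).Nonempty) :
    (⋂ i ∈ s, F i).Nonempty := by
  classical
  refine Convex.helly_theorem' (𝕜 := ℝ) (fun i hi => (hF i hi).convex) fun I hIs hI => ?_
  rw [Module.finrank_self] at hI
  interval_cases h : I.card
  · simp [Finset.card_eq_zero.mp h]
  · obtain ⟨i, rfl⟩ := Finset.card_eq_one.mp h
    have hi := hIs (Finset.mem_singleton_self i)
    simpa using hpair i hi i hi
  · obtain ⟨i, j, -, rfl⟩ := Finset.card_eq_two.mp h
    simpa [Set.inter_comm] using hpair i (hIs (by simp)) j (hIs (by simp))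

theorem StrictMono.Icc_inter_Icc_nonempty_iff {α β : Type*} [LinearOrder α] [LinearOrder β]
    {e : α → β} (he : StrictMono e) {a₁ b₁ a₂ b₂ : α} :
    (Set.Icc (e a₁) (e b₁) ∩ Set.Icc (e a₂) (e b₂)).Nonempty ↔
      (Set.Icc a₁ b₁ ∩ Set.Icc a₂ b₂).Nonempty := by
  simp only [Set.Icc_inter_Icc, Set.nonempty_Icc, ← he.monotone.map_max, ← he.monotone.map_min,
    he.le_iff_le]

theorem Finset.coe_eq_Icc_of_ordConnected {α : Type*} [LinearOrder α] {S : Finset α}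
    (hS : S.Nonempty) (h : (S : Set α).OrdConnected) :
    (S : Set α) = Set.Icc (S.min' hS) (S.max' hS) :=
  Set.Subset.antisymm (fun _ hx => ⟨S.min'_le _ hx, S.le_max' _ hx⟩)
    (h.out (S.min'_mem hS) (S.max'_mem hS))

theorem hasCOP_of_mem_iff {R α : Type*} [LinearOrder α] {n : ℕ} {M : R → Fin n → Bool}
    (t : Fin n → α) (I : R → Set α) (hI : ∀ i, (I i).OrdConnected)
    (hM : ∀ i j, M i j = true ↔ t j ∈ I i) : HasCOP M := by
  refine ⟨Tuple.sort t, fun i a b c hab hbc ha hc => ?_⟩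
  have hmono := Tuple.monotone_sort t
  rw [hM] at ha hc ⊢
  exact (hI i).out ha hc ⟨hmono hab, hmono hbc⟩

section CliqueMatrix

variable {V C : Type*} {G : SimpleGraph V} {N : V → C → Bool}

theorem IsMaximalClique.mem_of_forall_adj {Q : Set V} (hQ : IsMaximalClique G Q) {v : V}
    (hv : ∀ u ∈ Q, v ≠ u → G.Adj v u) : v ∈ Q :=
  hQ.2 _ (hQ.1.insert hv) (Set.subset_insert v Q) ▸ Set.mem_insert v Q

theorem exists_isMaximalClique_superset [Finite V] {s : Set V} (hs : G.IsClique s) :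
    ∃ Q, IsMaximalClique G Q ∧ s ⊆ Q := by
  obtain ⟨Q, ⟨hsQ, hQ⟩, hmax⟩ := Set.Finite.exists_maximalFor Set.ncard
    {Q | s ⊆ Q ∧ G.IsClique Q} (Set.toFinite _) ⟨s, le_rfl, hs⟩
  refine ⟨Q, ⟨hQ, fun Q' hQ' hQQ' => ?_⟩, hsQ⟩
  have hcard := hmax ⟨hsQ.trans hQQ', hQ'⟩ (Set.ncard_le_ncard hQQ')
  exact (Set.eq_of_subset_of_ncard_le hQQ' hcard).symm

theorem IsCliqueMatrix.isMaximalClique_col (hN : IsCliqueMatrix G N) (j : C) :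
    IsMaximalClique G {i | N i j = true} :=
  (hN.2 _).mpr ⟨j, rfl⟩

theorem IsCliqueMatrix.exists_col_superset [Finite V] (hN : IsCliqueMatrix G N) {s : Set V}
    (hs : G.IsClique s) : ∃ j, s ⊆ {i | N i j = true} := by
  obtain ⟨Q, hQ, hsQ⟩ := exists_isMaximalClique_superset hs
  obtain ⟨j, rfl⟩ := (hN.2 Q).mp hQ
  exact ⟨j, hsQ⟩

theorem IsCliqueMatrix.exists_col_mem [Finite V] (hN : IsCliqueMatrix G N) (v : V) :
    ∃ j, N v j = true := by
  obtain ⟨j, hj⟩ := hN.exists_col_superset (G.isClique_singleton v)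
  exact ⟨j, hj rfl⟩

theorem IsCliqueMatrix.eq_derivedGraph [Finite V] {n : ℕ} {N : V → Fin n → Bool}
    (hN : IsCliqueMatrix G N) : G = derivedGraph N := by
  ext u v
  constructor
  · intro huv
    obtain ⟨j, hj⟩ := hN.exists_col_superset (SimpleGraph.isClique_pair.mpr fun _ => huv)
    exact ⟨huv.ne, j, hj (Set.mem_insert u _), hj (Set.mem_insert_of_mem u rfl)⟩
  · rintro ⟨hne, j, hu, hv⟩
    exact (hN.isMaximalClique_col j).1 hu hv hne

theorem IsCliqueMatrix.exists_point_mem_iff [Fintype V] (hN : IsCliqueMatrix G N)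
    {I : V → Set ℝ} (hI : ∀ v, (I v).Nonempty ∧ (I v).OrdConnected)
    (hG : ∀ u v, u ≠ v → (G.Adj u v ↔ (I u ∩ I v).Nonempty)) :
    ∃ t : C → ℝ, ∀ v j, N v j = true ↔ t j ∈ I v := by
  have hcommon : ∀ j, ∃ x, ∀ v, N v j = true → x ∈ I v := by
    intro j
    set s := Finset.univ.filter (N · j = true)
    have hs : ∀ v, v ∈ s ↔ N v j = true := by simp [s]
    have hpair : ∀ u ∈ s, ∀ v ∈ s, (I u ∩ I v).Nonempty := by
      intro u hu v hv
      rcases eq_or_ne u v with rfl | huv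
      · simpa using (hI u).1
      · exact (hG u v huv).mp ((hN.isMaximalClique_col j).1 ((hs u).mp hu) ((hs v).mp hv) huv)
    obtain ⟨x, hx⟩ := Real.helly_ordConnected (fun v _ => (hI v).2) hpair
    exact ⟨x, fun v hv => Set.mem_iInter₂.mp hx v ((hs v).mpr hv)⟩
  choose t ht using hcommon
  refine ⟨t, fun v j => ⟨ht j v, fun hv => (hN.isMaximalClique_col j).mem_of_forall_adj ?_⟩⟩
  intro u hu hvu
  exact (hG v u hvu).mpr ⟨t j, hv, ht j u hu⟩

end CliqueMatrix

theorem IsIntervalGraph.hasCOP {V : Type*} [Fintype V] {G : SimpleGraph V} {n : ℕ}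
    {N : V → Fin n → Bool} (hG : IsIntervalGraph G) (hN : IsCliqueMatrix G N) : HasCOP N := by
  obtain ⟨I, hI, hGI⟩ := hG
  obtain ⟨t, ht⟩ := hN.exists_point_mem_iff hI hGI
  exact hasCOP_of_mem_iff t I (fun v => (hI v).2) ht

theorem coe_rowFinset {R : Type*} {n : ℕ} (M : R → Fin n → Bool) (i : R) :
    (rowFinset M i : Set (Fin n)) = rowSet M i := by
  ext j
  simp [rowFinset, rowSet]

theorem derivedGraph_comp_perm {R : Type*} {n : ℕ} (M : R → Fin n → Bool)
    (σ : Equiv.Perm (Fin n)) : derivedGraph (fun i p => M i (σ p)) = derivedGraph M := by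
  ext u v
  exact and_congr_right fun _ =>
    (σ.surjective.exists (p := fun k => M u k = true ∧ M v k = true)).symm

theorem isIntervalGraph_derivedGraph_of_ordConnected {R : Type*} {n : ℕ}
    {M : R → Fin n → Bool} (hrow : ∀ i, ∃ j, M i j = true)
    (hM : ∀ i, (rowSet M i).OrdConnected) :
    IsIntervalGraph (derivedGraph M) := by
  have hne : ∀ i, (rowFinset M i).Nonempty := fun i => by
    obtain ⟨j, hj⟩ := hrow i
    exact ⟨j, by simpa [rowFinset] using hj⟩
  have hIcc : ∀ i, (rowFinset M i : Set (Fin n)) =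
      Set.Icc ((rowFinset M i).min' (hne i)) ((rowFinset M i).max' (hne i)) := fun i =>
    Finset.coe_eq_Icc_of_ordConnected (hne i) (coe_rowFinset M i ▸ hM i)
  have he : StrictMono fun p : Fin n => ((p : ℕ) : ℝ) :=
    Nat.strictMono_cast.comp Fin.val_strictMono
  refine ⟨fun i => Set.Icc (((rowFinset M i).min' (hne i) : ℕ) : ℝ)
      (((rowFinset M i).max' (hne i) : ℕ) : ℝ), fun i => ⟨?_, Set.ordConnected_Icc⟩,
    fun u v huv => ?_⟩
  · exact Set.nonempty_Icc.mpr (he.monotone (Finset.min'_le_max' _ (hne i)))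
  · rw [he.Icc_inter_Icc_nonempty_iff, ← hIcc, ← hIcc]
    simp [derivedGraph, huv, Set.Nonempty, rowFinset]

theorem HasCOP.isIntervalGraph_derivedGraph {R : Type*} {n : ℕ} {M : R → Fin n → Bool}
    (hM : HasCOP M) (hrow : ∀ i, ∃ j, M i j = true) : IsIntervalGraph (derivedGraph M) := by
  obtain ⟨σ, hσ⟩ := hM
  rw [← derivedGraph_comp_perm M σ]
  refine isIntervalGraph_derivedGraph_of_ordConnected (fun i => ?_) fun i =>
    ⟨fun a ha c hc b hb => hσ i a b c hb.1 hb.2 ha hc⟩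
  obtain ⟨j, hj⟩ := hrow i
  exact ⟨σ.symm j, by simpa using hj⟩

/-- A finite graph `G` is an interval graph iff its clique
matrix has the consecutive ones property. -/
theorem stmt0 {m l : ℕ} (G : SimpleGraph (Fin m)) (N : Fin m → Fin l → Bool)
    (hN : IsCliqueMatrix G N) :
    IsIntervalGraph G ↔ HasCOP N := by
  refine ⟨fun hG => hG.hasCOP hN, fun hcop => ?_⟩
  rw [hN.eq_derivedGraph]
  exact hcop.isIntervalGraph_derivedGraph hN.exists_col_mem
end

section
/- If a binary matrix M has the consecutive ones property, then for every triple of pairwise intersecting sets S_a, S_b, S_c in the set system S(M), one of the three sets is contained in the union of the other two. -/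
/-!
After permuting the columns, every row set is an interval of `Fin n`. If three pairwise
intersecting intervals each had a point outside the other two, the middle one of these three
points would lie between points of the other two intervals; as those two intervals meet, their
union is an interval, so it contains the middle point, a contradiction.
-/

namespace Set

variable {α : Type*} [LinearOrder α] {s t u : Set α}

theorem OrdConnected.union' (H : (s ∩ t).Nonempty) (hs : s.OrdConnected)
    (ht : t.OrdConnected) : (s ∪ t).OrdConnected := by
  obtain ⟨p, hps, hpt⟩ := H
  refine ⟨fun x hx y hy z hz => ?_⟩
  rcases le_total z p with hzp | hpz
  · rcases hx with hx | hx
    · exact Or.inl (hs.out hx hps ⟨hz.1, hzp⟩)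
    · exact Or.inr (ht.out hx hpt ⟨hz.1, hzp⟩)
  · rcases hy with hy | hy
    · exact Or.inl (hs.out hps hy ⟨hpz, hz.2⟩)
    · exact Or.inr (ht.out hpt hy ⟨hpz, hz.2⟩)

theorem mem_uIcc_or_mem_uIcc_or_mem_uIcc (x y z : α) :
    y ∈ uIcc x z ∨ x ∈ uIcc y z ∨ z ∈ uIcc x y := by
  simp only [mem_uIcc]
  rcases le_total x y with hxy | hyx <;> rcases le_total y z with hyz | hzy <;>
    rcases le_total x z with hxz | hzx <;> tauto

theorem OrdConnected.subset_union_of_pairwise_inter_nonempty (hs : s.OrdConnected)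
    (ht : t.OrdConnected) (hu : u.OrdConnected) (hst : (s ∩ t).Nonempty)
    (hsu : (s ∩ u).Nonempty) (htu : (t ∩ u).Nonempty) :
    s ⊆ t ∪ u ∨ t ⊆ s ∪ u ∨ u ⊆ s ∪ t := by
  by_contra hcon
  simp only [not_or, not_subset] at hcon
  obtain ⟨⟨x, hxs, hx⟩, ⟨y, hyt, hy⟩, ⟨z, hzu, hz⟩⟩ := hcon
  rcases mem_uIcc_or_mem_uIcc_or_mem_uIcc x y z with hmid | hmid | hmid
  · exact hy ((hs.union' hsu hu).uIcc_subset (Or.inl hxs) (Or.inr hzu) hmid)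
  · exact hx ((ht.union' htu hu).uIcc_subset (Or.inl hyt) (Or.inr hzu) hmid)
  · exact hz ((hs.union' hst ht).uIcc_subset (Or.inl hxs) (Or.inr hyt) hmid)

end Set

theorem HasCOP.exists_perm_ordConnected {R : Type*} {n : ℕ} {M : R → Fin n → Bool}
    (h : HasCOP M) : ∃ σ : Equiv.Perm (Fin n), ∀ i, (σ ⁻¹' rowSet M i).OrdConnected := by
  obtain ⟨σ, hσ⟩ := h
  exact ⟨σ, fun i => ⟨fun a ha c hc b hb => hσ i a b c hb.1 hb.2 ha hc⟩⟩

/-- If `M` has the consecutive ones property, then for every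
triple of pairwise intersecting row sets, one of them is contained in the
union of the other two. -/
theorem stmt5 {m n : ℕ} (M : Fin m → Fin n → Bool) (h : HasCOP M)
    (ra rb rc : Fin m)
    (hab : (rowSet M ra ∩ rowSet M rb).Nonempty)
    (hac : (rowSet M ra ∩ rowSet M rc).Nonempty)
    (hbc : (rowSet M rb ∩ rowSet M rc).Nonempty) :
    rowSet M ra ⊆ rowSet M rb ∪ rowSet M rc ∨
    rowSet M rb ⊆ rowSet M ra ∪ rowSet M rc ∨
    rowSet M rc ⊆ rowSet M ra ∪ rowSet M rb := by
  obtain ⟨σ, hσ⟩ := h.exists_perm_ordConnected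
  simpa only [← Set.preimage_union, Equiv.preimage_subset] using
    (hσ ra).subset_union_of_pairwise_inter_nonempty (hσ rb) (hσ rc)
      (hab.preimage σ.surjective) (hac.preimage σ.surjective) (hbc.preimage σ.surjective)
end
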